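/- arXiv:2501.01288 — 3 statements merged into one kernel-verified Lean document; each statement's English description precedes it below -/
import Mathlib

section
/- Let G = ⟨s₁,…,s_r⟩ ≤ W ≤ Sym(2n) be a string group generated by involutions, where W ≅ D_n with W = SN, S ≅ Sym(n) acting simultaneously on {1,…,n} and {n+1,…,2n}, and N the subgroup of even sign changes. If G_{1,…,r−1} = S is a string C-group and s_r ∈ N ∖ Z(G), then G = W and (G, {s₁,…,s_r}) is a string C-group. -/
/-!
Write `S` for the diagonal `Sym(n)` and `N` for the sign changes; `S` normalises `N` and
`S ∩ N = 1`. A sign change `t = s_r` that is not central in `G` flips some `a` and fixes some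
`b`; its commutator with `(a b)(n+a n+b) ∈ S` is the sign change on `{a, b}`, which `S`
conjugates to `β₀`. Hence `G ⊇ ⟨S, β₀⟩ = W`.

Every `G_T` lies in `G_{T∖{r}} N`, so `S ∩ N = 1` and the intersection property of `S` give
`G_F ∩ G_T = G_{F ∩ T}` whenever `r ∉ F`. The general case reduces to this one: for `m ∉ I`,
`G_I` is the product of the commuting subgroups generated below and above `m`, and induction
shrinks `I` and `J` to final segments, which are nested.
-/

/-- `βᵢ` generators of the standard copy of the Coxeter group `Dₙ` inside `Sym(2n)`
(realized as permutations of `ℕ`, moving only points in `{1,…,2n}`). -/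
def beta (n i : ℕ) : Equiv.Perm ℕ :=
  if i = 0 then Equiv.swap 1 (n + 1) * Equiv.swap 2 (n + 2)
  else Equiv.swap i (i + 1) * Equiv.swap (n + i) (n + i + 1)

/-- The standard copy of the Coxeter group `Dₙ` in `Sym(2n)`, generated by `β₀,…,β_{n-1}`. -/
def Dn (n : ℕ) : Subgroup (Equiv.Perm ℕ) :=
  Subgroup.closure {g | ∃ i < n, g = beta n i}

/-- The subgroup `N` of even sign changes: it is generated by (hence consists exactly of)
products of an even number of transpositions of the form `(i, n+i)`, `1 ≤ i ≤ n`. -/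
def Neven (n : ℕ) : Subgroup (Equiv.Perm ℕ) :=
  Subgroup.closure {g | ∃ i ∈ Finset.Icc 1 n, ∃ j ∈ Finset.Icc 1 n,
    g = Equiv.swap i (n + i) * Equiv.swap j (n + j)}

/-- For a tuple `s : Fin r → G` and `J ⊆ {1,…,r}`, the subgroup `G_J = ⟨sⱼ : j ∈ J⟩`. -/
def subJ {G : Type*} [Group G] {r : ℕ} (s : Fin r → G) (J : Set (Fin r)) : Subgroup G :=
  Subgroup.closure (s '' J)

/-- The intersection property `G_J ⊓ G_K = G_{J ∩ K}` holds for all subsets `J, K` of `A`;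
`IsCOn s Set.univ` says that `(⟨s⟩, s)` is a string C-group provided `s` is a string
group generated by involutions. -/
def IsCOn {G : Type*} [Group G] {r : ℕ} (s : Fin r → G) (A : Set (Fin r)) : Prop :=
  ∀ J ⊆ A, ∀ K ⊆ A, subJ s J ⊓ subJ s K = subJ s (J ∩ K)

open Equiv

section GroupTheory

variable {G : Type*} [Group G]

lemma inf_sup_le_of_le_normalizer {H K N : Subgroup G} (hKH : K ≤ H)
    (hKN : K ≤ Subgroup.normalizer (N : Set G)) (hHN : H ⊓ N = ⊥) : H ⊓ (K ⊔ N) ≤ K := by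
  intro g hg
  obtain ⟨hgH, hgKN⟩ := Subgroup.mem_inf.1 hg
  have hgKN' : g ∈ ((K ⊔ N : Subgroup G) : Set G) := hgKN
  rw [Subgroup.coe_mul_of_left_le_normalizer_right K N hKN] at hgKN'
  obtain ⟨k, hk, m, hm, rfl⟩ := hgKN'
  have hmH : m ∈ H := by simpa using mul_mem (inv_mem (hKH hk)) hgH
  have hm1 : m ∈ H ⊓ N := Subgroup.mem_inf.2 ⟨hmH, hm⟩
  rw [hHN, Subgroup.mem_bot] at hm1
  simpa [hm1] using hk

lemma conj_swap_mul_swap {α : Type*} [DecidableEq α] (f : Perm α) (u v u' v' : α) :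
    f * (swap u v * swap u' v') * f⁻¹ = swap (f u) (f v) * swap (f u') (f v') := by
  rw [swap_apply_apply, swap_apply_apply, conj_mul]

/-- The product of two of the three double transpositions on `{a, b, c, d}` is the third. -/
lemma swap_mul_swap_mul_inv_eq {α : Type*} [DecidableEq α] {a b c d : α} (hab : a ≠ b)
    (hac : a ≠ c) (had : a ≠ d) (hbc : b ≠ c) (hbd : b ≠ d) (hcd : c ≠ d) :
    swap c b * swap a d * (swap a b * swap c d)⁻¹ = swap a c * swap b d := by
  ext x
  simp only [mul_inv_rev, swap_inv, Perm.mul_apply, swap_apply_def]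
  split_ifs <;> simp_all

end GroupTheory

def IsString {G : Type*} [Group G] {r : ℕ} (s : Fin r → G) : Prop :=
  ∀ i j : Fin r, (i : ℕ) + 2 ≤ (j : ℕ) ∨ (j : ℕ) + 2 ≤ (i : ℕ) → Commute (s i) (s j)

section StringGroup

variable {G : Type*} [Group G] {r : ℕ} (s : Fin r → G)

lemma subJ_mono {I J : Set (Fin r)} (h : I ⊆ J) : subJ s I ≤ subJ s J :=
  Subgroup.closure_mono (Set.image_mono h)

lemma mem_subJ {I : Set (Fin r)} {i : Fin r} (h : i ∈ I) : s i ∈ subJ s I :=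
  Subgroup.subset_closure ⟨i, h, rfl⟩

lemma subJ_inter_le_inf (I J : Set (Fin r)) : subJ s (I ∩ J) ≤ subJ s I ⊓ subJ s J :=
  le_inf (subJ_mono s Set.inter_subset_left) (subJ_mono s Set.inter_subset_right)

lemma isCOn_iff_forall_inf_le {A : Set (Fin r)} :
    IsCOn s A ↔ ∀ J ⊆ A, ∀ K ⊆ A, subJ s J ⊓ subJ s K ≤ subJ s (J ∩ K) :=
  forall₄_congr fun J _ K _ => ⟨le_of_eq, (le_antisymm · (subJ_inter_le_inf s J K))⟩

variable {s}

lemma subJ_le_centralizer (hs : IsString s) {I J : Set (Fin r)}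
    (hIJ : ∀ i ∈ I, ∀ j ∈ J, (i : ℕ) + 2 ≤ (j : ℕ)) :
    subJ s I ≤ Subgroup.centralizer (subJ s J) := by
  rw [subJ, Subgroup.closure_le, subJ, Subgroup.centralizer_closure]
  rintro _ ⟨i, hi, rfl⟩ _ ⟨j, hj, rfl⟩
  exact (hs i j (.inl (hIJ i hi j hj))).symm.eq

lemma exists_mul_of_mem_subJ (hs : IsString s) {I : Set (Fin r)} {m : Fin r} (hm : m ∉ I)
    {g : G} (hg : g ∈ subJ s I) :
    ∃ a ∈ subJ s {i ∈ I | i < m}, ∃ b ∈ subJ s {i ∈ I | m < i}, a * b = g := by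
  have hsplit : subJ s I ≤ subJ s {i ∈ I | i < m} ⊔ subJ s {i ∈ I | m < i} := by
    refine (Subgroup.closure_le _).2 ?_
    rintro _ ⟨i, hi, rfl⟩
    rcases lt_trichotomy i m with h | rfl | h
    · exact Subgroup.mem_sup_left (mem_subJ s ⟨hi, h⟩)
    · exact absurd hi hm
    · exact Subgroup.mem_sup_right (mem_subJ s ⟨hi, h⟩)
  have hnorm : subJ s {i ∈ I | i < m} ≤ Subgroup.normalizer (subJ s {i ∈ I | m < i} : Set G) :=
    (subJ_le_centralizer hs fun i (hi : i ∈ I ∧ i < m) j (hj : j ∈ I ∧ m < j) => by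
      have := hi.2; have := hj.2; simp only [Fin.lt_def] at *; omega).trans
      (Subgroup.centralizer_le_normalizer _)
  have hg' : g ∈ ((subJ s {i ∈ I | i < m} ⊔ subJ s {i ∈ I | m < i} : Subgroup G) : Set G) :=
    hsplit hg
  rw [Subgroup.coe_mul_of_left_le_normalizer_right _ _ hnorm] at hg'
  exact Set.mem_mul.1 hg'

def HasInfPropertyBelowLast (s : Fin r → G) : Prop :=
  ∀ F ⊆ {i : Fin r | (i : ℕ) + 1 < r}, ∀ T, subJ s F ⊓ subJ s T ≤ subJ s (F ∩ T)

lemma inf_le_of_inf_le_upper (hs : IsString s) (hA : HasInfPropertyBelowLast s)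
    {I J : Set (Fin r)} {m : Fin r} (hm : m ∉ I)
    (hup : subJ s {i ∈ I | m < i} ⊓ subJ s J ≤ subJ s ({i ∈ I | m < i} ∩ J)) :
    subJ s I ⊓ subJ s J ≤ subJ s (I ∩ J) := by
  rintro g ⟨hgI, hgJ⟩
  obtain ⟨a, ha, b, hb, rfl⟩ := exists_mul_of_mem_subJ hs hm hgI
  have hbJ' : b ∈ subJ s (J ∪ {i ∈ I | m < i}) := subJ_mono s Set.subset_union_right hb
  have haJ' : a ∈ subJ s (J ∪ {i ∈ I | m < i}) := by
    simpa using mul_mem (subJ_mono s Set.subset_union_left hgJ) (inv_mem hbJ')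
  have haIJ : a ∈ subJ s (I ∩ J) := by
    refine subJ_mono s ?_ (hA _ (fun i hi => ?_) _ (Subgroup.mem_inf.2 ⟨ha, haJ'⟩))
    · rintro i ⟨⟨hiI, him⟩, hiJ | ⟨_, hmi⟩⟩
      · exact ⟨hiI, hiJ⟩
      · exact absurd (him.trans hmi) (lt_irrefl i)
    · show (i : ℕ) + 1 < r
      have := hi.2; have := m.isLt; simp only [Fin.lt_def] at *; omega
  have hbJ : b ∈ subJ s J := by
    simpa using mul_mem (inv_mem (subJ_mono s Set.inter_subset_right haIJ)) hgJ
  exact mul_mem haIJ (subJ_mono s (Set.inter_subset_inter_left _ (Set.sep_subset _ _))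
    (hup (Subgroup.mem_inf.2 ⟨hb, hbJ⟩)))

theorem isCOn_univ (hs : IsString s) (hA : HasInfPropertyBelowLast s) : IsCOn s Set.univ := by
  suffices ∀ p : Set (Fin r) × Set (Fin r), subJ s p.1 ⊓ subJ s p.2 ≤ subJ s (p.1 ∩ p.2) from
    (isCOn_iff_forall_inf_le s).2 fun I _ J _ => this (I, J)
  intro p
  induction p using WellFoundedLT.induction with | _ p ih
  obtain ⟨I, J⟩ := p
  have hlt {K : Set (Fin r)} {j m : Fin r} (hj : j ∈ K) (hjm : j < m) : {i ∈ K | m < i} < K :=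
    (Set.sep_subset _ _).ssubset_of_not_subset fun h => lt_asymm hjm (h hj).2
  by_cases hI : IsUpperSet I
  · by_cases hJ : IsUpperSet J
    · rcases hI.total hJ with h | h
      · exact (Set.inter_eq_left.2 h).symm ▸ inf_le_left
      · exact (Set.inter_eq_right.2 h).symm ▸ inf_le_right
    · obtain ⟨j, m, hjm, hj, hm⟩ : ∃ j m, j < m ∧ j ∈ J ∧ m ∉ J := by
        simpa [isUpperSet_iff_forall_lt] using hJ
      rw [inf_comm, Set.inter_comm]
      refine inf_le_of_inf_le_upper hs hA hm ?_
      rw [inf_comm, Set.inter_comm]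
      exact ih (I, _) (Prod.mk_lt_mk_iff_right.2 (hlt hj hjm))
  · obtain ⟨i, m, him, hi, hm⟩ : ∃ i m, i < m ∧ i ∈ I ∧ m ∉ I := by
      simpa [isUpperSet_iff_forall_lt] using hI
    exact inf_le_of_inf_le_upper hs hA hm (ih (_, J) (Prod.mk_lt_mk_iff_left.2 (hlt hi him)))

end StringGroup

/-- Identifies `n + i` with `i`: the fibres of `fold n` are the pairs `{i, n + i}` with
`1 ≤ i ≤ n` and singletons. -/
def fold (n x : ℕ) : ℕ := if x ≤ n then x else x - n

/-- All sign changes (`N` is the even part): the permutations preserving every fibre of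
`fold n`. -/
def signChanges (n : ℕ) : Subgroup (Perm ℕ) where
  carrier := {g | ∀ x, fold n (g x) = fold n x}
  one_mem' _ := rfl
  mul_mem' ha hb x := (ha _).trans (hb x)
  inv_mem' {g} hg x := by simpa using (hg (g⁻¹ x)).symm

section SignChanges

variable {n : ℕ} {g : Perm ℕ}

lemma apply_of_mem_signChanges (hg : g ∈ signChanges n) {a : ℕ} (ha : a ∈ Set.Icc 1 n) :
    (g a = a ∧ g (n + a) = n + a) ∨ (g a = n + a ∧ g (n + a) = a) := by
  have h1 : fold n (g a) = fold n a := hg a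
  have h2 : fold n (g (n + a)) = fold n (n + a) := hg (n + a)
  obtain ⟨ha1, han⟩ := ha
  have hne : g a ≠ g (n + a) := g.injective.ne (by omega)
  unfold fold at h1 h2
  split_ifs at h1 h2 <;> omega

lemma eq_one_of_mem_signChanges (hg : g ∈ signChanges n)
    (hfix : ∀ a ∈ Set.Icc 1 n, g a = a) : g = 1 := by
  ext x
  have h1 : fold n (g x) = fold n x := hg x
  have h2 : g x ∈ Set.Icc 1 n → g x = x := fun h => g.injective (hfix _ h)
  have h3 : x ∈ Set.Icc 1 n → g x = x := hfix x
  simp only [Set.mem_Icc] at h2 h3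
  unfold fold at h1
  split_ifs at h1 <;> simp only [Perm.coe_one, id_eq] <;> omega

lemma swap_mem_signChanges {i : ℕ} (hi : i ∈ Set.Icc 1 n) : swap i (n + i) ∈ signChanges n := by
  obtain ⟨hi1, hin⟩ := hi
  intro x
  rw [swap_apply_def]
  unfold fold
  split_ifs <;> omega

lemma Neven_le_signChanges (n : ℕ) : Neven n ≤ signChanges n := by
  refine (Subgroup.closure_le _).2 ?_
  rintro _ ⟨i, hi, j, hj, rfl⟩
  exact mul_mem (swap_mem_signChanges (Finset.mem_Icc.1 hi))
    (swap_mem_signChanges (Finset.mem_Icc.1 hj))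

lemma mem_normalizer_signChanges (σ : Perm ℕ) (hg : ∀ x, fold n (g x) = σ (fold n x)) :
    g ∈ Subgroup.normalizer (signChanges n : Set (Perm ℕ)) := by
  refine Subgroup.mem_normalizer_iff.2 fun h => ⟨fun hh x => ?_, fun hh x => ?_⟩
  · calc fold n (g (h (g⁻¹ x))) = σ (fold n (g⁻¹ x)) := by rw [hg, hh]
      _ = fold n x := by rw [← hg]; simp
  · simpa [hg] using hh (g x)

open scoped Pointwise in
lemma stabilizer_Iic_inf_signChanges :
    MulAction.stabilizer (Perm ℕ) (Set.Iic n) ⊓ signChanges n = ⊥ := by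
  refine eq_bot_iff.2 fun g ⟨hstab, hg⟩ => Subgroup.mem_bot.2 (Perm.ext fun x => ?_)
  have h1 : fold n (g x) = fold n x := hg x
  have h2 := Set.ext_iff.1 (MulAction.mem_stabilizer_iff.1 hstab) (g x)
  rw [← Perm.smul_def, Set.smul_mem_smul_set_iff, Set.mem_Iic, Set.mem_Iic, Perm.smul_def] at h2
  unfold fold at h1
  split_ifs at h1 <;> simp only [Perm.coe_one, id_eq] <;> omega

end SignChanges

/-- The subgroup `S ≅ Sym(n)` of the statement, acting diagonally on `{1,…,n}` and
`{n+1,…,2n}`. -/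
def diagSym (n : ℕ) : Subgroup (Perm ℕ) :=
  Subgroup.closure {g | ∃ i, 1 ≤ i ∧ i < n ∧ g = beta n i}

def diagSwap (n a b : ℕ) : Perm ℕ := swap a b * swap (n + a) (n + b)

section Diagonal

variable {n : ℕ}

lemma beta_eq_diagSwap {i : ℕ} (hi : i ≠ 0) : beta n i = diagSwap n i (i + 1) := by
  rw [beta, if_neg hi]
  rfl

lemma diagSwap_apply_low {x y a : ℕ} (hx : x ∈ Set.Icc 1 n) (hy : y ∈ Set.Icc 1 n)
    (ha : a ∈ Set.Icc 1 n) : diagSwap n x y a = swap x y a := by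
  obtain ⟨_, _⟩ := hx; obtain ⟨_, _⟩ := hy; obtain ⟨_, _⟩ := ha
  simp only [diagSwap, Perm.mul_apply, swap_apply_def]
  split_ifs <;> omega

lemma diagSwap_apply_high {x y a : ℕ} (hx : x ∈ Set.Icc 1 n) (hy : y ∈ Set.Icc 1 n)
    (ha : a ∈ Set.Icc 1 n) : diagSwap n x y (n + a) = n + swap x y a := by
  obtain ⟨_, _⟩ := hx; obtain ⟨_, _⟩ := hy; obtain ⟨_, _⟩ := ha
  simp only [diagSwap, Perm.mul_apply, swap_apply_def]
  split_ifs <;> omega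

lemma swap_apply_mem_Icc {x y a : ℕ} (hx : x ∈ Set.Icc 1 n) (hy : y ∈ Set.Icc 1 n)
    (ha : a ∈ Set.Icc 1 n) : swap x y a ∈ Set.Icc 1 n := by
  rw [swap_apply_def]
  split_ifs <;> assumption

lemma diagSwap_conj_swap {x y a : ℕ} (hx : x ∈ Set.Icc 1 n) (hy : y ∈ Set.Icc 1 n)
    (ha : a ∈ Set.Icc 1 n) :
    diagSwap n x y * swap a (n + a) * (diagSwap n x y)⁻¹ = swap (swap x y a) (n + swap x y a) := by
  rw [← swap_apply_apply, diagSwap_apply_low hx hy ha, diagSwap_apply_high hx hy ha]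

lemma diagSwap_conj_diagSwap {x y a b : ℕ} (hx : x ∈ Set.Icc 1 n) (hy : y ∈ Set.Icc 1 n)
    (ha : a ∈ Set.Icc 1 n) (hb : b ∈ Set.Icc 1 n) :
    diagSwap n x y * diagSwap n a b * (diagSwap n x y)⁻¹
      = diagSwap n (swap x y a) (swap x y b) := by
  rw [diagSwap.eq_1 n a b, conj_swap_mul_swap, diagSwap_apply_low hx hy ha,
    diagSwap_apply_low hx hy hb, diagSwap_apply_high hx hy ha, diagSwap_apply_high hx hy hb,
    diagSwap]

lemma beta_mem_diagSym {i : ℕ} (hi1 : 1 ≤ i) (hin : i < n) : beta n i ∈ diagSym n :=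
  Subgroup.subset_closure ⟨i, hi1, hin, rfl⟩

/-- `diagSwap n a (b + 1)` is the conjugate of `β_b` by `diagSwap n a b`. -/
lemma diagSwap_mem_diagSym {a b : ℕ} (ha : a ∈ Set.Icc 1 n) (hb : b ∈ Set.Icc 1 n) :
    diagSwap n a b ∈ diagSym n := by
  wlog hab : a ≤ b generalizing a b
  · rw [diagSwap, swap_comm, swap_comm (n + a)]
    exact this hb ha (by omega)
  obtain ⟨ha1, han⟩ := ha
  obtain ⟨_, hbn⟩ := hb
  induction b, hab using Nat.le_induction with
  | base =>
    rw [diagSwap, swap_self, swap_self]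
    exact one_mem _
  | succ b hab ih =>
    have hb : b ∈ Set.Icc 1 n := ⟨by omega, by omega⟩
    have h := mul_mem (mul_mem (ih (by omega) hb.2) (beta_mem_diagSym hb.1 (by omega)))
      (inv_mem (ih (by omega) hb.2))
    rwa [beta_eq_diagSwap (by omega), diagSwap_conj_diagSwap ⟨ha1, han⟩ hb hb ⟨by omega, hbn⟩,
      swap_apply_right, swap_apply_of_ne_of_ne (by omega) (by omega)] at h

lemma fold_beta {i : ℕ} (hi1 : 1 ≤ i) (hin : i < n) (x : ℕ) :
    fold n (beta n i x) = swap i (i + 1) (fold n x) := by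
  rw [beta_eq_diagSwap (by omega)]
  simp only [diagSwap, fold, Perm.mul_apply, swap_apply_def]
  split_ifs <;> omega

lemma beta_apply_le_iff {i : ℕ} (hi1 : 1 ≤ i) (hin : i < n) (x : ℕ) :
    beta n i x ≤ n ↔ x ≤ n := by
  rw [beta_eq_diagSwap (by omega)]
  simp only [diagSwap, Perm.mul_apply, swap_apply_def]
  split_ifs <;> omega

end Diagonal

section DiagonalAndSignChanges

variable {n : ℕ}

lemma diagSym_le_normalizer : diagSym n ≤ Subgroup.normalizer (signChanges n : Set (Perm ℕ)) :=
  (Subgroup.closure_le _).2 fun _ ⟨_, hi1, hin, hg⟩ =>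
    hg ▸ mem_normalizer_signChanges _ (fold_beta hi1 hin)

open scoped Pointwise in
lemma diagSym_inf_signChanges : diagSym n ⊓ signChanges n = ⊥ := by
  refine eq_bot_iff.2 (le_trans (inf_le_inf_right _ ?_) stabilizer_Iic_inf_signChanges.le)
  refine (Subgroup.closure_le _).2 fun _ ⟨i, hi1, hin, hg⟩ => ?_
  subst hg
  refine MulAction.mem_stabilizer_iff.2 (Set.ext fun x => ?_)
  rw [Set.mem_smul_set_iff_inv_smul_mem, Perm.smul_def, Set.mem_Iic, Set.mem_Iic,
    ← beta_apply_le_iff hi1 hin]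
  simp

lemma hasInfPropertyBelowLast_of_diagSym {r : ℕ} (hr : 1 ≤ r) {s : Fin r → Perm ℕ}
    (hS : subJ s {i | (i : ℕ) + 1 < r} = diagSym n) (hC : IsCOn s {i | (i : ℕ) + 1 < r})
    (hN : s ⟨r - 1, by omega⟩ ∈ signChanges n) : HasInfPropertyBelowLast s := by
  intro F hF T g hg
  obtain ⟨hgF, hgT⟩ := Subgroup.mem_inf.1 hg
  have hT : subJ s T ≤ subJ s (T ∩ {i | (i : ℕ) + 1 < r}) ⊔ signChanges n := by
    refine (Subgroup.closure_le _).2 ?_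
    rintro _ ⟨i, hi, rfl⟩
    by_cases hlast : (i : ℕ) + 1 < r
    · exact Subgroup.mem_sup_left (mem_subJ s ⟨hi, hlast⟩)
    · have hi_last : i = ⟨r - 1, by omega⟩ := Fin.ext (by have := i.isLt; simp; omega)
      exact hi_last ▸ Subgroup.mem_sup_right hN
  have hK : subJ s (T ∩ {i | (i : ℕ) + 1 < r}) ≤ diagSym n :=
    hS ▸ subJ_mono s Set.inter_subset_right
  have hgK := inf_sup_le_of_le_normalizer hK (hK.trans diagSym_le_normalizer)
    diagSym_inf_signChanges (Subgroup.mem_inf.2 ⟨hS ▸ subJ_mono s hF hgF, hT hgT⟩)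
  exact subJ_mono s (Set.inter_subset_inter_right _ Set.inter_subset_left)
    ((hC F hF _ Set.inter_subset_right).le (Subgroup.mem_inf.2 ⟨hgF, hgK⟩))

end DiagonalAndSignChanges

section GeneratingDn

variable {n : ℕ}

lemma commute_of_forall_flip (hn : 2 ≤ n) {t : Perm ℕ}
    (ht : ∀ a ∈ Set.Icc 1 n, t a = n + a ∧ t (n + a) = a) : ∀ g ∈ Dn n, Commute t g := by
  suffices Dn n ≤ Subgroup.centralizer {t} from
    fun g hg => (Subgroup.mem_centralizer_singleton_iff.1 (this hg)).symm
  refine (Subgroup.closure_le _).2 ?_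
  rintro _ ⟨i, hin, rfl⟩
  rw [SetLike.mem_coe, Subgroup.mem_centralizer_singleton_iff, eq_comm, ← mul_inv_eq_iff_eq_mul]
  rcases Nat.eq_zero_or_pos i with rfl | hi
  · obtain ⟨h1, h1'⟩ := ht 1 ⟨le_rfl, by omega⟩
    obtain ⟨h2, h2'⟩ := ht 2 ⟨by omega, hn⟩
    rw [beta, if_pos rfl, conj_swap_mul_swap, h1, h1', h2, h2', swap_comm (n + 1),
      swap_comm (n + 2)]
  · obtain ⟨h1, h1'⟩ := ht i ⟨hi, hin.le⟩
    obtain ⟨h2, h2'⟩ := ht (i + 1) ⟨by omega, hin⟩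
    rw [beta_eq_diagSwap hi.ne', diagSwap, conj_swap_mul_swap, h1, h1', h2, h2']
    exact (Perm.disjoint_swap_swap (by simp; omega)).commute.eq

lemma commutator_diagSwap {t : Perm ℕ} {a b : ℕ} (ha : a ∈ Set.Icc 1 n) (hb : b ∈ Set.Icc 1 n)
    (hab : a ≠ b) (hta : t a = n + a ∧ t (n + a) = a) (htb : t b = b ∧ t (n + b) = n + b) :
    t * diagSwap n a b * t⁻¹ * (diagSwap n a b)⁻¹ = swap a (n + a) * swap b (n + b) := by
  obtain ⟨_, _⟩ := ha; obtain ⟨_, _⟩ := hb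
  rw [diagSwap, conj_swap_mul_swap, hta.1, htb.1, hta.2, htb.2]
  exact swap_mul_swap_mul_inv_eq (by omega) (by omega) (by omega) (by omega) (by omega) (by omega)

lemma beta_zero_mem_of_swap_mul_swap_mem (hn : 2 ≤ n) {G : Subgroup (Perm ℕ)}
    (hSG : diagSym n ≤ G) {a b : ℕ} (ha : a ∈ Set.Icc 1 n) (hb : b ∈ Set.Icc 1 n) (hab : a ≠ b)
    (h : swap a (n + a) * swap b (n + b) ∈ G) : beta n 0 ∈ G := by
  have hmove {x y c d : ℕ} (hx : x ∈ Set.Icc 1 n) (hy : y ∈ Set.Icc 1 n)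
      (hc : c ∈ Set.Icc 1 n) (hd : d ∈ Set.Icc 1 n) (hcd : swap c (n + c) * swap d (n + d) ∈ G) :
      swap (swap x y c) (n + swap x y c) * swap (swap x y d) (n + swap x y d) ∈ G := by
    rw [← diagSwap_conj_swap hx hy hc, ← diagSwap_conj_swap hx hy hd, conj_mul]
    have hσ := hSG (diagSwap_mem_diagSym hx hy)
    exact mul_mem (mul_mem hσ hcd) (inv_mem hσ)
  have h1 : (1 : ℕ) ∈ Set.Icc 1 n := ⟨le_rfl, by omega⟩
  have h2 : (2 : ℕ) ∈ Set.Icc 1 n := ⟨by omega, hn⟩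
  have hb' : swap 1 a b ∈ Set.Icc 1 n := swap_apply_mem_Icc h1 ha hb
  have hb'1 : swap 1 a b ≠ 1 := by simpa using (swap 1 a).injective.ne hab.symm
  -- move `a` to `1`, then `swap 1 a b` to `2`
  have step1 := hmove h1 ha ha hb h
  rw [swap_apply_right] at step1
  have step2 := hmove h2 hb' h1 hb' step1
  rw [swap_apply_right, swap_apply_of_ne_of_ne (by omega) hb'1.symm] at step2
  rwa [beta, if_pos rfl]

lemma beta_zero_mem (hn : 2 ≤ n) {G : Subgroup (Perm ℕ)} (hGW : G ≤ Dn n)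
    (hSG : diagSym n ≤ G) {t : Perm ℕ} (htG : t ∈ G) (htN : t ∈ signChanges n)
    (hZ : ¬ ∀ g ∈ G, Commute t g) : beta n 0 ∈ G := by
  obtain ⟨a, ha, hta⟩ : ∃ a ∈ Set.Icc 1 n, t a = n + a ∧ t (n + a) = a := by
    by_contra! h
    refine hZ fun g _ => ?_
    rw [eq_one_of_mem_signChanges htN fun a ha =>
      ((apply_of_mem_signChanges htN ha).resolve_right fun h' => h a ha h'.1 h'.2).1]
    exact Commute.one_left g
  obtain ⟨b, hb, htb⟩ : ∃ b ∈ Set.Icc 1 n, t b = b ∧ t (n + b) = n + b := by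
    by_contra! h
    exact hZ fun g hg => commute_of_forall_flip hn (fun a ha =>
      (apply_of_mem_signChanges htN ha).resolve_left fun h' => h a ha h'.1 h'.2) g (hGW hg)
  have hab : a ≠ b := by
    rintro rfl
    have := ha.1
    omega
  have hc := hSG (diagSwap_mem_diagSym ha hb)
  have hcomm := mul_mem (mul_mem (mul_mem htG hc) (inv_mem htG)) (inv_mem hc)
  rw [commutator_diagSwap ha hb hab hta htb] at hcomm
  exact beta_zero_mem_of_swap_mul_swap_mem hn hSG ha hb hab hcomm

lemma eq_Dn_of_beta_zero_mem {G : Subgroup (Perm ℕ)} (hGW : G ≤ Dn n) (hSG : diagSym n ≤ G)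
    (h0 : beta n 0 ∈ G) : G = Dn n := by
  refine le_antisymm hGW ((Subgroup.closure_le _).2 ?_)
  rintro _ ⟨i, hin, rfl⟩
  rcases Nat.eq_zero_or_pos i with rfl | hi
  exacts [h0, hSG (beta_mem_diagSym hi hin)]

end GeneratingDn

/-- If `G = ⟨s₁,…,s_r⟩ ≤ W ≅ Dₙ` is a string group generated by involutions with
`G_{1,…,r-1} = S ≅ Sym(n)` a string C-group and `s_r ∈ N ∖ Z(G)`, then `G = W` and
`(G, {s₁,…,s_r})` is a string C-group. -/
theorem stmt14 (n r : ℕ) (hn : 5 ≤ n) (hr : 1 ≤ r) (s : Fin r → Equiv.Perm ℕ)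
    (hmem : ∀ i, s i ∈ Dn n)
    (hcomm : ∀ i j : Fin r, (i : ℕ) + 2 ≤ (j : ℕ) ∨ (j : ℕ) + 2 ≤ (i : ℕ) →
      Commute (s i) (s j))
    (hS : subJ s {i | (i : ℕ) + 1 < r}
      = Subgroup.closure {g | ∃ i, 1 ≤ i ∧ i < n ∧ g = beta n i})
    (hC : IsCOn s {i | (i : ℕ) + 1 < r})
    (hNmem : s ⟨r - 1, by omega⟩ ∈ Neven n)
    (hZ : ¬ ∀ g ∈ Subgroup.closure (Set.range s), Commute (s ⟨r - 1, by omega⟩) g) :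
    Subgroup.closure (Set.range s) = Dn n ∧ IsCOn s Set.univ := by
  have hGW : Subgroup.closure (Set.range s) ≤ Dn n :=
    (Subgroup.closure_le _).2 (Set.range_subset_iff.2 hmem)
  have hSG : diagSym n ≤ Subgroup.closure (Set.range s) :=
    hS.ge.trans (Subgroup.closure_mono (Set.image_subset_range _ _))
  have htN := Neven_le_signChanges n hNmem
  have htG : s ⟨r - 1, by omega⟩ ∈ Subgroup.closure (Set.range s) :=
    Subgroup.subset_closure (Set.mem_range_self _)
  exact ⟨eq_Dn_of_beta_zero_mem hGW hSG (beta_zero_mem (by omega) hGW hSG htG htN hZ),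
    isCOn_univ hcomm (hasInfPropertyBelowLast_of_diagSym hr hS hC htN)⟩
end

section
/- Let n ≥ 5 be odd. Then the Coxeter group of type D_n admits a string C-group representation of rank n with Schläfli type {4, 3^{n−2}}. -/
/-!
Model `Dₙ` inside the hyperoctahedral group `Cₙ = {±1}ⁿ ⋊ Sₙ` as the signed permutations with
an even number of sign changes. Take `ρ₀` to be the sign change of every coordinate but the
first (even because `n` is odd) and `ρₖ = (k - 1, k)` for `k ≥ 1`. Then `ρ₀ρ₁` has order `4`
and `ρₖρₖ₊₁` is a `3`-cycle for `k ≥ 1`.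

For `J ⊆ {0, …, n - 1}` the subgroup `⟨ρⱼ : j ∈ J⟩` has an explicit description: its
permutations preserve the blocks of consecutive coordinates connected by the `ρⱼ`, `0 ≠ j ∈ J`,
and its sign vectors are trivial if `0 ∉ J`, and otherwise the even ones that are constant off
the block of `0`. The blocks of `0` are initial segments, hence nested, so these descriptions
are stable under intersection: this is the intersection property. Finally `ρ₀` and the Coxeter
generator `β₀` (the sign change of the first two coordinates) generate each other together with
the transpositions, so the `ρₖ` generate `Dₙ`.
-/

open Equiv Subgroup

theorem Equiv.Perm.extendDomain_swap {α β : Type*} [DecidableEq α] [DecidableEq β]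
    {p : β → Prop} [DecidablePred p] (f : α ≃ Subtype p) (a b : α) :
    (swap a b).extendDomain f = swap (f a : β) (f b) := by
  ext x
  by_cases hx : p x
  · obtain ⟨c, rfl⟩ : ∃ c, (f c : β) = x := ⟨f.symm ⟨x, hx⟩, by simp⟩
    rw [Perm.extendDomain_apply_image]
    exact ((Subtype.val_injective.comp f.injective).swap_apply a b c).symm
  · rw [Perm.extendDomain_apply_not_subtype _ _ hx, swap_apply_of_ne_of_ne] <;>
      rintro rfl <;> exact hx (f _).2

theorem isCOn_comp_iff {G K : Type*} [Group G] [Group K] {f : G →* K}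
    (hf : Function.Injective f) {r : ℕ} (s : Fin r → G) (A : Set (Fin r)) :
    IsCOn (f ∘ s) A ↔ IsCOn s A := by
  have hmap : ∀ J, subJ (f ∘ s) J = (subJ s J).map f := fun J => by
    rw [subJ, subJ, MonoidHom.map_closure, Set.image_comp]
  refine forall₂_congr fun J _ => forall₂_congr fun K _ => ?_
  rw [hmap, hmap, hmap, ← map_inf _ _ _ hf, (map_injective hf).eq_iff]

namespace SemidirectProduct

variable {N G : Type*} [Group N] [Group G] {φ : G →* MulAut N}

def subgroup (A : Subgroup N) (B : Subgroup G) (hAB : ∀ g ∈ B, ∀ a ∈ A, φ g a ∈ A) :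
    Subgroup (N ⋊[φ] G) where
  carrier := {x | x.left ∈ A ∧ x.right ∈ B}
  one_mem' := ⟨A.one_mem, B.one_mem⟩
  mul_mem' := fun ⟨ha, hb⟩ ⟨ha', hb'⟩ => ⟨A.mul_mem ha (hAB _ hb _ ha'), B.mul_mem hb hb'⟩
  inv_mem' := fun ⟨ha, hb⟩ => ⟨hAB _ (B.inv_mem hb) _ (A.inv_mem ha), B.inv_mem hb⟩

theorem mem_subgroup {A : Subgroup N} {B : Subgroup G} {hAB} {x : N ⋊[φ] G} :
    x ∈ subgroup A B hAB ↔ x.left ∈ A ∧ x.right ∈ B := Iff.rfl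

theorem commute_inl_inr {a : N} {g : G} (h : φ g a = a) : Commute (inl a : N ⋊[φ] G) (inr g) :=
  SemidirectProduct.ext (by simp [h]) (by simp)

end SemidirectProduct

theorem Pi.intUnits_sq {ι : Type*} (v : ι → ℤˣ) : v ^ 2 = 1 :=
  funext fun c => Int.units_sq (v c)

theorem Pi.mem_of_prod_eq_one {ι : Type*} [Fintype ι] [DecidableEq ι] {T : Subgroup (ι → ℤˣ)}
    {b : ι} {B : Set ι} (hT : ∀ c ∈ B, Pi.mulSingle b (-1) * Pi.mulSingle c (-1) ∈ T)
    {ε : ι → ℤˣ} (hε : ∀ c ∉ B, ε c = 1) (hprod : ∏ c, ε c = 1) : ε ∈ T := by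
  have : ε = ∏ c, Pi.mulSingle b (ε c) * Pi.mulSingle c (ε c) := by
    have h := map_prod (MonoidHom.mulSingle (fun _ : ι => ℤˣ) b) ε Finset.univ
    simp only [MonoidHom.mulSingle_apply, hprod, Pi.mulSingle_one] at h
    rw [Finset.prod_mul_distrib, ← h, one_mul, Finset.univ_prod_mulSingle]
  rw [this]
  refine prod_mem fun c _ => ?_
  by_cases hc : c ∈ B
  · rcases Int.units_eq_one_or (ε c) with h | h <;> rw [h]
    · simp [T.one_mem]
    · exact hT c hc
  · simp [hε c hc, T.one_mem]

section

attribute [local instance] arrowAction arrowMulDistribMulAction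

def signAct (n : ℕ) : Perm (Fin n) →* MulAut (Fin n → ℤˣ) :=
  MulDistribMulAction.toMulAut _ _

end

/-- The hyperoctahedral group `Cₙ`. -/
abbrev SignedPerm (n : ℕ) := (Fin n → ℤˣ) ⋊[signAct n] Perm (Fin n)

namespace SignedPerm

open SemidirectProduct

variable {n : ℕ}

@[simp] theorem signAct_apply (σ : Perm (Fin n)) (v : Fin n → ℤˣ) (c : Fin n) :
    signAct n σ v c = v (σ⁻¹ c) := rfl

theorem signAct_neg (σ : Perm (Fin n)) (v : Fin n → ℤˣ) :
    signAct n σ (-v) = -signAct n σ v := rfl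

def flipAt (a : Fin n) : Fin n → ℤˣ := Pi.mulSingle a (-1)

theorem signAct_flipAt (σ : Perm (Fin n)) (a : Fin n) : signAct n σ (flipAt a) = flipAt (σ a) :=
  Pi.mulSingle_comp_equiv σ⁻¹ a (-1)

/-- The adjacent transpositions `(k - 1, k)`, `k ∈ J`, connect `c` and `d`. -/
def SameBlock (J : Set (Fin n)) (c d : Fin n) : Prop :=
  ∀ k : Fin n, min (c : ℕ) d < k → (k : ℕ) ≤ max (c : ℕ) d → k ∈ J

section SameBlock

variable {J K : Set (Fin n)} {a b c : Fin n}

theorem sameBlock_refl (J : Set (Fin n)) (c : Fin n) : SameBlock J c c :=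
  fun _ h₁ h₂ => by omega

theorem SameBlock.symm (h : SameBlock J a b) : SameBlock J b a :=
  fun k h₁ h₂ => h k (by omega) (by omega)

theorem SameBlock.trans (h₁ : SameBlock J a b) (h₂ : SameBlock J b c) : SameBlock J a c := by
  intro k hk₁ hk₂
  by_cases hk : min (a : ℕ) b < k ∧ (k : ℕ) ≤ max (a : ℕ) b
  · exact h₁ k hk.1 hk.2
  · exact h₂ k (by omega) (by omega)

theorem sameBlock_inter_iff : SameBlock (J ∩ K) a b ↔ SameBlock J a b ∧ SameBlock K a b :=
  ⟨fun h => ⟨fun k h₁ h₂ => (h k h₁ h₂).1, fun k h₁ h₂ => (h k h₁ h₂).2⟩,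
    fun h k h₁ h₂ => ⟨h.1 k h₁ h₂, h.2 k h₁ h₂⟩⟩

end SameBlock

def blockPerms (J : Set (Fin n)) : Subgroup (Perm (Fin n)) where
  carrier := {σ | ∀ c, SameBlock J c (σ c)}
  one_mem' := sameBlock_refl J
  mul_mem' := fun hσ hτ c => (hτ c).trans (hσ _)
  inv_mem' := fun {σ} hσ c => by simpa using (hσ (σ⁻¹ c)).symm

theorem blockPerms_inf (J K : Set (Fin n)) :
    blockPerms J ⊓ blockPerms K = blockPerms (J ∩ K) := by
  ext σ
  exact ⟨fun h c => sameBlock_inter_iff.2 ⟨h.1 c, h.2 c⟩,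
    fun h => ⟨fun c => (sameBlock_inter_iff.1 (h c)).1, fun c => (sameBlock_inter_iff.1 (h c)).2⟩⟩

theorem swap_mem_blockPerms {J : Set (Fin n)} {a b : Fin n} (h : SameBlock J a b) :
    swap a b ∈ blockPerms J := by
  intro c
  rcases eq_or_ne c a with rfl | hca
  · simpa using h
  rcases eq_or_ne c b with rfl | hcb
  · simpa using h.symm
  · rw [swap_apply_of_ne_of_ne hca hcb]
    exact sameBlock_refl J c

section

variable [NeZero n]

theorem val_one_of_two_le (hn : 2 ≤ n) : ((1 : Fin n) : ℕ) = 1 :=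
  (Fin.val_one' n).trans (Nat.mod_eq_of_lt hn)

theorem sub_one_ne_self {k : Fin n} (hk : k ≠ 0) : k - 1 ≠ k := by
  refine Fin.ne_of_val_ne ?_
  rw [Fin.val_sub_one_of_ne_zero hk]
  exact (Nat.sub_one_lt (Fin.val_ne_zero_iff.2 hk)).ne

def adjSwaps (J : Set (Fin n)) : Set (Perm (Fin n)) :=
  {σ | ∃ k ∈ J, k ≠ 0 ∧ σ = swap (k - 1) k}

theorem isSwap_of_mem_adjSwaps {J : Set (Fin n)} {σ : Perm (Fin n)} (hσ : σ ∈ adjSwaps J) :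
    σ.IsSwap := by
  obtain ⟨k, -, hk, rfl⟩ := hσ
  exact ⟨k - 1, k, sub_one_ne_self hk, rfl⟩

theorem swap_mem_closure_adjSwaps {J : Set (Fin n)} {a b : Fin n} (h : SameBlock J a b) :
    swap a b ∈ closure (adjSwaps J) := by
  wlog hab : a ≤ b generalizing a b
  · rw [swap_comm]
    exact this h.symm (le_of_not_ge hab)
  obtain ⟨d, hd⟩ : ∃ d, (b : ℕ) = a + d := ⟨b - a, by rw [Fin.le_def] at hab; omega⟩
  induction d generalizing b with
  | zero =>
    rw [Fin.ext hd, swap_self]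
    exact one_mem _
  | succ d ih =>
    have hb : b ≠ 0 := fun h => by simp [h] at hd
    have hb' := Fin.val_sub_one_of_ne_zero hb
    refine SubmonoidClass.swap_mem_trans _ (ih (b := b - 1) (fun k h₁ h₂ => h k ?_ ?_) ?_ ?_)
      (subset_closure ⟨b, h b ?_ ?_, hb, rfl⟩) <;> simp only [Fin.le_def] at * <;> omega

theorem blockPerms_le_closure_adjSwaps (J : Set (Fin n)) :
    blockPerms J ≤ closure (adjSwaps J) := by
  intro σ hσ
  rw [mem_closure_isSwap fun _ => isSwap_of_mem_adjSwaps]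
  refine ⟨Set.toFinite _, fun c => ?_⟩
  rw [← swap_mem_closure_isSwap fun _ => isSwap_of_mem_adjSwaps]
  exact swap_mem_closure_adjSwaps (hσ c).symm

theorem inr_mem_closure {J : Set (Fin n)} {S : Set (SignedPerm n)}
    (hS : ∀ k ∈ J, k ≠ 0 → inr (swap (k - 1) k) ∈ S) {σ : Perm (Fin n)}
    (hσ : σ ∈ blockPerms J) : inr σ ∈ closure S := by
  have h := mem_map_of_mem (inr : Perm (Fin n) →* SignedPerm n)
    (blockPerms_le_closure_adjSwaps J hσ)
  rw [MonoidHom.map_closure] at h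
  refine closure_mono ?_ h
  rintro _ ⟨_, ⟨k, hk, hk0, rfl⟩, rfl⟩
  exact hS k hk hk0

/-- The generators `ρₖ`: `ρ₀` negates every coordinate but the first. -/
def gen (k : Fin n) : SignedPerm n :=
  if k = 0 then inl (-flipAt 0) else inr (swap (k - 1) k)

theorem gen_zero : gen (0 : Fin n) = inl (-flipAt 0) := if_pos rfl

theorem gen_of_ne_zero {k : Fin n} (hk : k ≠ 0) : gen k = inr (swap (k - 1) k) := if_neg hk

theorem prod_neg_flipAt_zero (hodd : Odd n) : ∏ c, (-flipAt 0 : Fin n → ℤˣ) c = 1 := by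
  rw [show ∏ c, (-flipAt 0 : Fin n → ℤˣ) c = ∏ c, -flipAt (0 : Fin n) c from rfl, Finset.prod_neg]
  simp [flipAt, hodd.neg_one_pow]

def zeroBlock (J : Set (Fin n)) : Set (Fin n) := {c | SameBlock J 0 c}

theorem zero_mem_zeroBlock (J : Set (Fin n)) : (0 : Fin n) ∈ zeroBlock J := sameBlock_refl J 0

theorem ne_zero_of_notMem_zeroBlock {J : Set (Fin n)} {c : Fin n} (hc : c ∉ zeroBlock J) :
    c ≠ 0 :=
  fun h => hc (h ▸ zero_mem_zeroBlock J)

theorem zeroBlock_inter (J K : Set (Fin n)) :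
    zeroBlock (J ∩ K) = zeroBlock J ∩ zeroBlock K :=
  Set.ext fun _ => sameBlock_inter_iff

theorem mem_zeroBlock_of_le {J : Set (Fin n)} {c d : Fin n} (hc : c ∈ zeroBlock J)
    (hdc : (d : ℕ) ≤ c) : d ∈ zeroBlock J :=
  fun k h₁ h₂ => hc k (by simp at h₁ ⊢; omega) (by simp at h₂ ⊢; omega)

theorem zeroBlock_total (J K : Set (Fin n)) :
    zeroBlock J ⊆ zeroBlock K ∨ zeroBlock K ⊆ zeroBlock J := by
  by_contra! h
  obtain ⟨c, hcJ, hcK⟩ := Set.not_subset.1 h.1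
  obtain ⟨d, hdK, hdJ⟩ := Set.not_subset.1 h.2
  rcases le_total (c : ℕ) d with hcd | hdc
  · exact hcK (mem_zeroBlock_of_le hdK hcd)
  · exact hdJ (mem_zeroBlock_of_le hcJ hdc)

def signs (J : Set (Fin n)) : Subgroup (Fin n → ℤˣ) where
  carrier := {ε | (0 ∈ J ∨ ε = 1) ∧ ∏ c, ε c = 1 ∧
    ∀ c ∉ zeroBlock J, ∀ d ∉ zeroBlock J, ε c = ε d}
  one_mem' := ⟨Or.inr rfl, Finset.prod_const_one, fun _ _ _ _ => rfl⟩
  mul_mem' := fun {ε ε'} ⟨h₀, hp, hc⟩ ⟨h₀', hp', hc'⟩ =>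
    ⟨h₀.elim Or.inl fun h => h₀'.imp_right fun h' => by rw [h, h', mul_one],
      by simp [Finset.prod_mul_distrib, hp, hp'],
      fun c hc₁ d hd₁ => by simp [hc c hc₁ d hd₁, hc' c hc₁ d hd₁]⟩
  inv_mem' := fun {ε} ⟨h₀, hp, hc⟩ =>
    ⟨h₀.imp_right fun h => by simp [h], by simp [hp], fun c hc₁ d hd₁ => by simp [hc c hc₁ d hd₁]⟩

theorem mem_signs {J : Set (Fin n)} {ε : Fin n → ℤˣ} : ε ∈ signs J ↔
    (0 ∈ J ∨ ε = 1) ∧ ∏ c, ε c = 1 ∧ ∀ c ∉ zeroBlock J, ∀ d ∉ zeroBlock J, ε c = ε d :=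
  Iff.rfl

theorem signs_inf (J K : Set (Fin n)) : signs J ⊓ signs K = signs (J ∩ K) := by
  have const_mono : ∀ {A B : Set (Fin n)} {ε : Fin n → ℤˣ}, A ⊆ B →
      (∀ c ∉ A, ∀ d ∉ A, ε c = ε d) → ∀ c ∉ B, ∀ d ∉ B, ε c = ε d :=
    fun hAB h c hc d hd => h c (fun h' => hc (hAB h')) d (fun h' => hd (hAB h'))
  ext ε
  simp only [mem_inf, mem_signs, zeroBlock_inter]
  rcases zeroBlock_total J K with h | h
  · rw [Set.inter_eq_left.2 h]
    have := const_mono h (ε := ε)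
    simp only [Set.mem_inter_iff]
    tauto
  · rw [Set.inter_eq_right.2 h]
    have := const_mono h (ε := ε)
    simp only [Set.mem_inter_iff]
    tauto

theorem signAct_mem_signs {J : Set (Fin n)} {σ : Perm (Fin n)} (hσ : σ ∈ blockPerms J)
    {ε : Fin n → ℤˣ} (hε : ε ∈ signs J) : signAct n σ ε ∈ signs J := by
  obtain ⟨h₀, hp, hc⟩ := hε
  have off : ∀ c ∉ zeroBlock J, σ⁻¹ c ∉ zeroBlock J := fun c hc h =>
    hc (h.trans (by simpa using hσ (σ⁻¹ c)))
  refine ⟨h₀.imp_right fun h => by rw [h, map_one], ?_,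
    fun c hc₁ d hd₁ => hc _ (off c hc₁) _ (off d hd₁)⟩
  simpa only [signAct_apply] using (Equiv.prod_comp σ⁻¹ ε).trans hp

def parabolic (J : Set (Fin n)) : Subgroup (SignedPerm n) :=
  SemidirectProduct.subgroup (signs J) (blockPerms J) fun _ hσ _ hε => signAct_mem_signs hσ hε

theorem parabolic_inf (J K : Set (Fin n)) : parabolic J ⊓ parabolic K = parabolic (J ∩ K) := by
  ext x
  simp only [mem_inf, parabolic, SemidirectProduct.mem_subgroup, ← signs_inf, ← blockPerms_inf]
  tauto

theorem gen_mem_parabolic (hodd : Odd n) {J : Set (Fin n)} {k : Fin n} (hk : k ∈ J) :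
    gen k ∈ parabolic J := by
  by_cases hk0 : k = 0
  · subst hk0
    refine ⟨⟨Or.inl hk, prod_neg_flipAt_zero hodd, fun c hc d hd => ?_⟩, one_mem _⟩
    simp [gen_zero, flipAt, ne_zero_of_notMem_zeroBlock hc, ne_zero_of_notMem_zeroBlock hd]
  · rw [gen_of_ne_zero hk0]
    refine ⟨one_mem _, swap_mem_blockPerms fun i h₁ h₂ => ?_⟩
    rw [Fin.val_sub_one_of_ne_zero hk0] at h₁ h₂
    rwa [Fin.ext (show (i : ℕ) = k by omega)]

theorem inr_mem_closure_gen {J : Set (Fin n)} {σ : Perm (Fin n)} (hσ : σ ∈ blockPerms J) :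
    inr σ ∈ closure (gen '' J) :=
  inr_mem_closure (S := gen '' J) (fun k hk hk0 => ⟨k, hk, gen_of_ne_zero hk0⟩) hσ

theorem inl_mem_closure_gen (hodd : Odd n) {J : Set (Fin n)} (h0 : 0 ∈ J) {ε : Fin n → ℤˣ}
    (hε : ε ∈ signs J) : inl ε ∈ closure (gen '' J) := by
  set T := (closure (gen '' J)).comap (inl : (Fin n → ℤˣ) →* SignedPerm n)
  have hneg : -flipAt 0 ∈ T := by
    rw [mem_comap, ← gen_zero]
    exact subset_closure (Set.mem_image_of_mem gen h0)
  have hpair : ∀ c ∈ zeroBlock J, flipAt 0 * flipAt c ∈ T := fun c hc => by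
    have hσ := inr_mem_closure_gen (swap_mem_blockPerms hc)
    have hconj : signAct n (swap 0 c) (-flipAt 0) ∈ T := by
      rw [mem_comap, inl_aut]
      exact mul_mem (mul_mem hσ hneg) (inv_mem hσ)
    simpa [signAct_neg, signAct_flipAt] using T.mul_mem hneg hconj
  have even_mem : ∀ ε' : Fin n → ℤˣ, (∀ c ∉ zeroBlock J, ε' c = 1) → ∏ c, ε' c = 1 → ε' ∈ T :=
    fun ε' h1 hp => Pi.mem_of_prod_eq_one hpair h1 hp
  obtain ⟨-, hp, hc⟩ := hε
  by_cases hone : ∀ c ∉ zeroBlock J, ε c = 1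
  · exact even_mem ε hone hp
  -- otherwise `ε` is `-1` off the block of `0`, and `ε * ρ₀` is `1` there
  simp only [not_forall] at hone
  obtain ⟨c, hc₀, hεc⟩ := hone
  refine (T.mul_mem_cancel_right hneg).1 (even_mem _ (fun d hd => ?_) ?_)
  · have : ε d = -1 := (hc d hd c hc₀).trans ((Int.units_eq_one_or _).resolve_left hεc)
    simp [flipAt, this, ne_zero_of_notMem_zeroBlock hd]
  · simp only [Pi.mul_apply, Finset.prod_mul_distrib, hp, prod_neg_flipAt_zero hodd, mul_one]

theorem closure_gen_image (hodd : Odd n) (J : Set (Fin n)) :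
    closure (gen '' J) = parabolic J := by
  refine le_antisymm ((closure_le _).2 ?_) fun g hg => ?_
  · rintro _ ⟨k, hk, rfl⟩
    exact gen_mem_parabolic hodd hk
  rw [← inl_left_mul_inr_right g]
  refine mul_mem ?_ (inr_mem_closure_gen hg.2)
  rcases hg.1.1 with h0 | h1
  · exact inl_mem_closure_gen hodd h0 hg.1
  · rw [h1, map_one]
    exact one_mem _

theorem isCOn_gen (hodd : Odd n) : IsCOn (gen : Fin n → SignedPerm n) Set.univ := by
  intro J _ K _
  simp only [subJ, closure_gen_image hodd, parabolic_inf]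

theorem orderOf_gen (hn : 2 ≤ n) (k : Fin n) : orderOf (gen k) = 2 := by
  by_cases hk : k = 0
  · have h1 : (1 : Fin n) ≠ 0 := Fin.val_ne_zero_iff.1 (by rw [val_one_of_two_le hn]; omega)
    rw [hk, gen_zero, orderOf_injective _ inl_injective]
    refine orderOf_eq_prime (Pi.intUnits_sq _) fun h => ?_
    simpa [flipAt, h1] using congrFun h 1
  · rw [gen_of_ne_zero hk, orderOf_injective _ inr_injective]
    refine orderOf_eq_prime (by rw [sq, swap_mul_self]) ?_
    rw [Ne, swap_eq_one_iff]
    exact sub_one_ne_self hk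

theorem commute_gen {i j : Fin n} (h : (i : ℕ) + 2 ≤ j) : Commute (gen i) (gen j) := by
  have hj : j ≠ 0 := Fin.val_ne_zero_iff.1 (by omega)
  have hj' := Fin.val_sub_one_of_ne_zero hj
  rw [gen_of_ne_zero hj]
  by_cases hi : i = 0
  · rw [hi, gen_zero]
    refine commute_inl_inr ?_
    rw [signAct_neg, signAct_flipAt, swap_apply_of_ne_of_ne] <;>
      exact Fin.ne_of_val_ne (by simp only [hi, hj', Fin.val_zero] at h ⊢; omega)
  · have hi' := Fin.val_sub_one_of_ne_zero hi
    have hi0 := Fin.val_ne_zero_iff.2 hi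
    rw [gen_of_ne_zero hi]
    refine ((Perm.disjoint_swap_swap ?_).commute).map inr
    simp only [List.nodup_cons, List.mem_cons, List.not_mem_nil, List.nodup_nil, Fin.ext_iff, hi',
      hj', or_false, not_or, not_false_eq_true, and_true]
    clear hi hj hi' hj'
    and_intros <;> omega

theorem commute_gen_of_far {i j : Fin n} (h : (i : ℕ) + 2 ≤ j ∨ (j : ℕ) + 2 ≤ i) :
    Commute (gen i) (gen j) :=
  h.elim commute_gen fun h => (commute_gen h).symm

theorem orderOf_gen_mul_gen_of_ne_zero {i j : Fin n} (hi : i ≠ 0) (hij : (j : ℕ) = i + 1) :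
    orderOf (gen i * gen j) = 3 := by
  have hj : j ≠ 0 := Fin.val_ne_zero_iff.1 (by omega)
  have hi' := Fin.val_sub_one_of_ne_zero hi
  have hji : j - 1 = i := Fin.ext (by rw [Fin.val_sub_one_of_ne_zero hj]; omega)
  rw [gen_of_ne_zero hi, gen_of_ne_zero hj, hji, ← map_mul, orderOf_injective _ inr_injective,
    swap_comm (i - 1)]
  exact (Perm.isThreeCycle_swap_mul_swap_same (sub_one_ne_self hi).symm
    (Fin.ne_of_val_ne (by omega)) (Fin.ne_of_val_ne (by omega))).orderOf

theorem orderOf_gen_zero_mul_gen {j : Fin n} (hj : (j : ℕ) = 1) :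
    orderOf (gen 0 * gen j) = 4 := by
  have hj0 : j ≠ 0 := Fin.val_ne_zero_iff.1 (by omega)
  have hj1 : j - 1 = 0 := Fin.ext (by rw [Fin.val_sub_one_of_ne_zero hj0, hj]; rfl)
  rw [gen_zero, gen_of_ne_zero hj0, hj1]
  have hsq : (inl (-flipAt 0) * inr (swap 0 j) : SignedPerm n) ^ 2 =
      inl (flipAt 0 * flipAt j) := by
    ext : 1 <;> simp [sq, signAct_neg, signAct_flipAt]
  refine orderOf_eq_prime_pow (p := 2) (n := 1) ?_ ?_
  · rw [pow_one, hsq]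
    refine fun h => hj0 ?_
    simpa [flipAt, Pi.mulSingle_apply, eq_comm] using congrFun (inl_injective h) 0
  · rw [show 2 ^ (1 + 1) = 2 * 2 from rfl, pow_mul, hsq, ← map_pow, Pi.intUnits_sq, map_one]

theorem orderOf_gen_mul_gen_succ {i j : Fin n} (hij : (j : ℕ) = i + 1) :
    orderOf (gen i * gen j) = if (i : ℕ) = 0 then 4 else 3 := by
  split_ifs with hi
  · rw [show i = 0 from Fin.val_eq_zero_iff.1 hi]
    exact orderOf_gen_zero_mul_gen (by omega)
  · exact orderOf_gen_mul_gen_of_ne_zero (Fin.val_ne_zero_iff.1 hi) hij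

end

/-- Where `beta` places the signed point `(c, ±1)`. -/
def signedPoint (n : ℕ) (p : Fin n × ℤˣ) : ℕ := if p.2 = 1 then p.1 + 1 else n + p.1 + 1

@[simp] theorem signedPoint_one (c : Fin n) : signedPoint n (c, 1) = c + 1 := if_pos rfl

@[simp] theorem signedPoint_neg_one (c : Fin n) : signedPoint n (c, -1) = n + c + 1 :=
  if_neg (show (-1 : ℤˣ) ≠ 1 by decide)

theorem signedPoint_injective : Function.Injective (signedPoint n) := by
  rintro ⟨c, u⟩ ⟨d, v⟩ h
  rcases Int.units_eq_one_or u with rfl | rfl <;> rcases Int.units_eq_one_or v with rfl | rfl <;>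
    simp [Fin.ext_iff] at h ⊢ <;> omega

instance : MulAction (SignedPerm n) (Fin n × ℤˣ) where
  smul g p := (g.right p.1, g.left (g.right p.1) * p.2)
  one_smul _ := by simp [HSMul.hSMul]
  mul_smul _ _ _ := by simp [HSMul.hSMul, mul_assoc]

theorem smul_def (g : SignedPerm n) (p : Fin n × ℤˣ) :
    g • p = (g.right p.1, g.left (g.right p.1) * p.2) := rfl

theorem toPermHom_inr_swap (a b : Fin n) :
    MulAction.toPermHom (SignedPerm n) (Fin n × ℤˣ) (inr (swap a b)) =
      swap (a, 1) (b, 1) * swap (a, -1) (b, -1) := by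
  ext ⟨c, u⟩ : 1
  rcases Int.units_eq_one_or u with rfl | rfl
  · rw [Perm.mul_apply, swap_apply_of_ne_of_ne (show ((c, 1) : Fin n × ℤˣ) ≠ (a, -1) by simp)
      (by simp), (Prod.mk_left_injective 1).swap_apply]
    simp [smul_def]
  · rw [Perm.mul_apply, (Prod.mk_left_injective (-1)).swap_apply,
      swap_apply_of_ne_of_ne (show ((swap a b c, -1) : Fin n × ℤˣ) ≠ (a, 1) by simp) (by simp)]
    simp [smul_def]

theorem toPermHom_inl_flipAt (a : Fin n) :
    MulAction.toPermHom (SignedPerm n) (Fin n × ℤˣ) (inl (flipAt a)) = swap (a, 1) (a, -1) := by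
  ext ⟨c, u⟩ : 1
  by_cases hc : c = a
  · subst hc
    rcases Int.units_eq_one_or u with rfl | rfl <;> simp [smul_def, flipAt]
  · rw [swap_apply_of_ne_of_ne (by simp [hc]) (by simp [hc])]
    simp [smul_def, flipAt, hc]

def toPermNat : SignedPerm n →* Perm ℕ :=
  (Perm.extendDomainHom (⟨signedPoint n, signedPoint_injective⟩ : Fin n × ℤˣ ↪ ℕ).toEquivRange).comp
    (MulAction.toPermHom _ _)

theorem toPermNat_injective : Function.Injective (toPermNat (n := n)) := by
  refine (Perm.extendDomainHom_injective _).comp ((injective_iff_map_eq_one _).2 fun g hg => ?_)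
  have h : ∀ p : Fin n × ℤˣ, g • p = p := fun p => congrArg (· p) hg
  have hr : ∀ c, g.right c = c := fun c => congrArg Prod.fst (h (c, 1))
  ext c : 2
  · simpa [smul_def, hr] using congrArg Prod.snd (h (c, 1))
  · exact hr c

theorem toPermNat_of_toPermHom_eq_swap_mul_swap {g : SignedPerm n} {p q p' q' : Fin n × ℤˣ}
    (hg : MulAction.toPermHom _ _ g = swap p q * swap p' q') :
    toPermNat g = swap (signedPoint n p) (signedPoint n q) *
      swap (signedPoint n p') (signedPoint n q') := by
  simp only [toPermNat, MonoidHom.comp_apply, hg, map_mul, Perm.extendDomainHom_apply,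
    Perm.extendDomain_swap]
  rfl

variable [NeZero n]

def coxeterGen (k : Fin n) : SignedPerm n :=
  if k = 0 then inl (flipAt 0 * flipAt 1) else gen k

theorem coxeterGen_of_ne_zero {k : Fin n} (hk : k ≠ 0) : coxeterGen k = gen k := if_neg hk

theorem toPermNat_coxeterGen (hn : 2 ≤ n) (k : Fin n) : toPermNat (coxeterGen k) = beta n k := by
  by_cases hk : k = 0
  · rw [coxeterGen, if_pos hk, toPermNat_of_toPermHom_eq_swap_mul_swap (by
      rw [map_mul, map_mul, toPermHom_inl_flipAt, toPermHom_inl_flipAt])]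
    simp [beta, hk, Nat.mod_eq_of_lt hn]
  · have hk' := Fin.val_sub_one_of_ne_zero hk
    have hk0 := Fin.val_ne_zero_iff.2 hk
    rw [coxeterGen_of_ne_zero hk, gen_of_ne_zero hk,
      toPermNat_of_toPermHom_eq_swap_mul_swap (toPermHom_inr_swap _ _)]
    simp only [beta, hk0, if_false, signedPoint_one, signedPoint_neg_one, hk']
    rw [show (k : ℕ) - 1 + 1 = k by omega, show n + ((k : ℕ) - 1) + 1 = n + k by omega]

theorem coxeterGen_zero_mem_closure_gen (hodd : Odd n) :
    inl (flipAt 0 * flipAt 1) ∈ closure (Set.range (gen : Fin n → SignedPerm n)) := by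
  rw [← Set.image_univ, closure_gen_image hodd]
  refine ⟨⟨Or.inl trivial, ?_, fun c hc => absurd (fun _ _ _ => trivial) hc⟩, one_mem _⟩
  simp [Finset.prod_mul_distrib, flipAt, Finset.prod_pi_mulSingle']

theorem gen_zero_mem_closure_coxeterGen (hodd : Odd n) (hn : 2 ≤ n) :
    inl (-flipAt 0) ∈ closure (Set.range (coxeterGen : Fin n → SignedPerm n)) := by
  have h01 : (0 : Fin n) ≠ 1 := Fin.ne_of_val_ne (by rw [val_one_of_two_le hn, Fin.val_zero]; omega)
  set T := (closure (Set.range coxeterGen)).comap (inl : (Fin n → ℤˣ) →* SignedPerm n)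
  refine mem_comap.1 (Pi.mem_of_prod_eq_one (T := T) (b := 0) (B := {0}ᶜ) (fun c hc => ?_)
    (fun c hc => ?_) (prod_neg_flipAt_zero hodd))
  · have hσ : inr (swap 1 c) ∈ closure (Set.range (coxeterGen (n := n))) :=
      inr_mem_closure (J := Set.univ) (S := Set.range coxeterGen)
        (fun k _ hk => ⟨k, by rw [coxeterGen_of_ne_zero hk, gen_of_ne_zero hk]⟩)
        (swap_mem_blockPerms fun _ _ _ => trivial)
    have h01' : inl (flipAt 0 * flipAt 1) ∈ closure (Set.range (coxeterGen (n := n))) :=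
      subset_closure ⟨0, if_pos rfl⟩
    have hconj : flipAt 0 * flipAt c = signAct n (swap 1 c) (flipAt 0 * flipAt 1) := by
      rw [map_mul, signAct_flipAt, signAct_flipAt, swap_apply_of_ne_of_ne h01 (Ne.symm hc),
        swap_apply_left]
    change inl (flipAt 0 * flipAt c) ∈ closure (Set.range coxeterGen)
    rw [hconj, inl_aut]
    exact mul_mem (mul_mem hσ h01') (inv_mem hσ)
  · rw [Set.notMem_compl_iff, Set.mem_singleton_iff] at hc
    simp [hc, flipAt]

theorem closure_range_coxeterGen (hodd : Odd n) (hn : 2 ≤ n) :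
    closure (Set.range coxeterGen) = closure (Set.range (gen : Fin n → SignedPerm n)) := by
  refine le_antisymm ((closure_le _).2 ?_) ((closure_le _).2 ?_) <;> rintro _ ⟨k, rfl⟩ <;>
    by_cases hk : k = 0
  · rw [coxeterGen, if_pos hk]
    exact coxeterGen_zero_mem_closure_gen hodd
  · rw [coxeterGen_of_ne_zero hk]
    exact subset_closure (Set.mem_range_self k)
  · rw [hk, gen_zero]
    exact gen_zero_mem_closure_coxeterGen hodd hn
  · exact subset_closure ⟨k, coxeterGen_of_ne_zero hk⟩

theorem map_closure_range_gen (hodd : Odd n) (hn : 2 ≤ n) :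
    (closure (Set.range (gen (n := n)))).map toPermNat = Dn n := by
  rw [← closure_range_coxeterGen hodd hn, MonoidHom.map_closure, ← Set.range_comp, Dn]
  congr 1
  ext g
  simp only [Set.mem_range, Function.comp_apply, toPermNat_coxeterGen hn, Set.mem_ofPred_eq]
  exact ⟨fun ⟨k, hk⟩ => ⟨k, k.2, hk.symm⟩, fun ⟨i, hi, hg⟩ => ⟨⟨i, hi⟩, hg.symm⟩⟩

end SignedPerm

/-- For odd `n ≥ 5`, the Coxeter group of type `Dₙ` admits a string C-group
representation of rank `n` with Schläfli type `{4, 3^(n-2)}`. -/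
theorem stmt16 (n : ℕ) (hn : 5 ≤ n) (hodd : Odd n) :
    ∃ s : Fin n → (Dn n),
      (∀ i, orderOf (s i) = 2) ∧
      Subgroup.closure (Set.range s) = ⊤ ∧
      (∀ i j : Fin n, (i : ℕ) + 2 ≤ (j : ℕ) ∨ (j : ℕ) + 2 ≤ (i : ℕ) →
        Commute (s i) (s j)) ∧
      IsCOn s Set.univ ∧
      ∀ i j : Fin n, (j : ℕ) = (i : ℕ) + 1 →
        orderOf (s i * s j) = if (i : ℕ) = 0 then 4 else 3 := by
  have hn2 : 2 ≤ n := by omega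
  have : NeZero n := ⟨by omega⟩
  have hD := SignedPerm.map_closure_range_gen hodd hn2
  have hmem : ∀ k, SignedPerm.toPermNat (SignedPerm.gen k) ∈ Dn n := fun k => by
    rw [← hD]
    exact mem_map_of_mem _ (subset_closure (Set.mem_range_self k))
  let s : Fin n → Dn n := fun k => ⟨SignedPerm.toPermNat (SignedPerm.gen k), hmem k⟩
  have hs : (Dn n).subtype ∘ s = SignedPerm.toPermNat ∘ SignedPerm.gen := rfl
  have hinj := SignedPerm.toPermNat_injective (n := n)
  refine ⟨s, fun i => ?_, ?_,
    fun i j hij => ((SignedPerm.commute_gen_of_far hij).map SignedPerm.toPermNat).of_map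
      (Dn n).subtype_injective,
    (isCOn_comp_iff (Dn n).subtype_injective s _).1 ?_, fun i j hij => ?_⟩
  · rw [← SignedPerm.orderOf_gen hn2 i, ← orderOf_injective _ (Dn n).subtype_injective,
      ← orderOf_injective _ hinj]
    rfl
  · apply map_injective (Dn n).subtype_injective
    rw [MonoidHom.map_closure, ← Set.range_comp, hs, Set.range_comp, ← MonoidHom.map_closure, hD,
      ← MonoidHom.range_eq_map, range_subtype]
  · rw [hs, isCOn_comp_iff hinj]
    exact SignedPerm.isCOn_gen hodd
  · rw [← SignedPerm.orderOf_gen_mul_gen_succ hij, ← orderOf_injective _ (Dn n).subtype_injective,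
      ← orderOf_injective _ hinj, map_mul, map_mul]
    rfl
end

section
/- Let W ≅ D_n with n ≥ 6 even, realized in Sym(2n) as W = SN with S ≅ Sym(n) and N the even sign changes, and let W̄ = W/N ≅ Sym(n). Suppose {s₁,…,s_n} is a string C-group representation of W. Then no sᵢ lies in the center Z(W). -/
/-!
If `sᵢ` is central of order two, then `H = ⟨sⱼ : j ≠ i⟩` together with `sᵢ` generates `W`, while
the intersection property gives `sᵢ ∉ H`. Hence `W = H ∪ sᵢH` and `H` contains every square.
Every double sign change `εₐε_b` is a square in `W` (of `ε_bε_c·(a b)`), so for `n` even `H`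
contains their product, the central element `-1`. On the other hand, commuting with the
transpositions `(1 x)` and with `β₀` pins a central element down by its value at `1`, which must
be `±1`; so `sᵢ = -1 ∈ H`, a contradiction.
-/

open Equiv

theorem Subgroup.mul_self_mem_of_sup_zpowers_eq_top {G : Type*} [Group G] {H : Subgroup G}
    {c : G} (hc : c ∈ Subgroup.center G) (hc2 : c * c = 1)
    (htop : H ⊔ Subgroup.zpowers c = ⊤) (g : G) : g * g ∈ H := by
  have hcentral : Subgroup.zpowers c ≤ Subgroup.center G := Subgroup.zpowers_le.2 hc
  have : (Subgroup.zpowers c).Normal := ⟨fun z hz g => by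
    rwa [Subgroup.mem_center_iff.1 (hcentral hz) g, mul_inv_cancel_right]⟩
  obtain ⟨h, hh, z, hz, rfl⟩ := Subgroup.mem_sup_of_normal_right.1 (htop ▸ Subgroup.mem_top g)
  have hzz : z * z = 1 := by
    obtain ⟨k, rfl⟩ := Subgroup.mem_zpowers_iff.1 hz
    rw [← zpow_add, ← two_mul, zpow_mul, zpow_two, hc2, one_zpow]
  have hsq : h * z * (h * z) = h * h := by
    rw [mul_assoc, ← mul_assoc z, ← Subgroup.mem_center_iff.1 (hcentral hz) h, mul_assoc,
      hzz, mul_one]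
  exact hsq ▸ H.mul_mem hh hh

theorem IsCOn.apply_notMem_subJ_compl {G : Type*} [Group G] {r : ℕ} {s : Fin r → G}
    (hC : IsCOn s Set.univ) {i : Fin r} (hi : s i ≠ 1) : s i ∉ subJ s {i}ᶜ := by
  intro h
  have hmem : s i ∈ subJ s {i} ⊓ subJ s {i}ᶜ :=
    ⟨Subgroup.subset_closure (Set.mem_image_of_mem s rfl), h⟩
  rw [hC _ (Set.subset_univ _) _ (Set.subset_univ _), Set.inter_compl_self, subJ,
    Set.image_empty, Subgroup.closure_empty] at hmem
  exact hi (Subgroup.mem_bot.1 hmem)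

theorem subJ_compl_sup_zpowers {G : Type*} [Group G] {r : ℕ} {s : Fin r → G}
    (hgen : Subgroup.closure (Set.range s) = ⊤) (i : Fin r) :
    subJ s {i}ᶜ ⊔ Subgroup.zpowers (s i) = ⊤ := by
  refine eq_top_iff.2 (hgen ▸ (Subgroup.closure_le _).2 ?_)
  rintro _ ⟨j, rfl⟩
  by_cases hj : j = i
  · exact hj ▸ Subgroup.mem_sup_right (Subgroup.mem_zpowers _)
  · exact Subgroup.mem_sup_left (Subgroup.subset_closure ⟨j, hj, rfl⟩)

namespace Dn

/- The point `n + x` plays the role of `-x` (`1 ≤ x ≤ n`): `diagSwap n j k` is the transposition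
`(j k)` of `Sym(n) ≤ W`, `doubleSignChange n a b` is `εₐε_b ∈ N`, and `signChangeUpTo n n`
is `-1`. -/

def diagSwap (n j k : ℕ) : Perm ℕ := swap j k * swap (n + j) (n + k)

def doubleSignChange (n a b : ℕ) : Perm ℕ := swap a (n + a) * swap b (n + b)

def signChangeUpTo (n : ℕ) : ℕ → Perm ℕ
  | 0 => 1
  | M + 1 => signChangeUpTo n M * swap (M + 1) (n + (M + 1))

theorem conj_swap_mul_swap (g : Perm ℕ) (a b c d : ℕ) :
    g * (swap a b * swap c d) * g⁻¹ = swap (g a) (g b) * swap (g c) (g d) := by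
  rw [swap_apply_apply, swap_apply_apply]; group

theorem beta_mem {n i : ℕ} (hi : i < n) : beta n i ∈ Dn n :=
  Subgroup.subset_closure ⟨i, hi, rfl⟩

theorem beta_zero (n : ℕ) : beta n 0 = doubleSignChange n 1 2 := rfl

theorem beta_of_pos {n i : ℕ} (hi : i ≠ 0) : beta n i = diagSwap n i (i + 1) := if_neg hi

theorem le_fixingSubgroup {n : ℕ} (hn : 2 ≤ n) :
    Dn n ≤ fixingSubgroup (Perm ℕ) (Set.Icc 1 (2 * n))ᶜ := by
  refine (Subgroup.closure_le _).2 ?_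
  rintro _ ⟨i, hi, rfl⟩ ⟨x, hx⟩
  simp only [Set.mem_compl_iff, Set.mem_Icc, not_and_or, not_le] at hx
  rw [Perm.smul_def, beta]
  split_ifs <;> simp only [Perm.mul_apply, swap_apply_def] <;> split_ifs <;> omega

theorem diagSwap_self (n j : ℕ) : diagSwap n j j = 1 := by
  rw [diagSwap, swap_self, swap_self]; rfl

theorem diagSwap_comm (n j k : ℕ) : diagSwap n j k = diagSwap n k j := by
  rw [diagSwap, diagSwap, swap_comm j, swap_comm (n + j)]

theorem diagSwap_mem_of_le {n j k : ℕ} (hj : 1 ≤ j) (hjk : j ≤ k) (hk : k ≤ n) :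
    diagSwap n j k ∈ Dn n := by
  induction k, hjk using Nat.le_induction with
  | base => rw [diagSwap_self]; exact one_mem _
  | succ k hjk ih =>
    have hconj : diagSwap n j (k + 1) = diagSwap n j k * beta n k * (diagSwap n j k)⁻¹ := by
      rw [beta_of_pos (by omega)]
      simp only [diagSwap]
      rw [conj_swap_mul_swap]
      simp only [Perm.mul_apply, swap_apply_def]
      congr 2 <;> split_ifs <;> omega
    rw [hconj]
    have := ih (by omega)
    exact mul_mem (mul_mem this (beta_mem (by omega))) (inv_mem this)

theorem diagSwap_mem {n j k : ℕ} (hj : 1 ≤ j) (hk : 1 ≤ k) (hjn : j ≤ n) (hkn : k ≤ n) :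
    diagSwap n j k ∈ Dn n := by
  rcases le_total j k with h | h
  · exact diagSwap_mem_of_le hj h hkn
  · exact diagSwap_comm n j k ▸ diagSwap_mem_of_le hk h hjn

theorem doubleSignChange_comm {n a b : ℕ} (hab : a ≠ b) (ha : a ≠ n + b) (hb : b ≠ n + a) :
    doubleSignChange n a b = doubleSignChange n b a := by
  ext x
  simp only [doubleSignChange, Perm.mul_apply, swap_apply_def]
  split_ifs <;> omega

theorem doubleSignChange_eq_mul_self {n a b c : ℕ} (ha : 1 ≤ a) (hb : 1 ≤ b) (hc : 1 ≤ c)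
    (han : a ≤ n) (hbn : b ≤ n) (hcn : c ≤ n) (hab : a ≠ b) (hac : a ≠ c) (hbc : b ≠ c) :
    doubleSignChange n a b =
      doubleSignChange n b c * diagSwap n a b * (doubleSignChange n b c * diagSwap n a b) := by
  ext x
  simp only [doubleSignChange, diagSwap, Perm.mul_apply]
  by_cases hx : x = a ∨ x = b ∨ x = c ∨ x = n + a ∨ x = n + b ∨ x = n + c
  · rcases hx with rfl | rfl | rfl | rfl | rfl | rfl <;>
      simp (disch := omega) only [swap_apply_left, swap_apply_right, swap_apply_of_ne_of_ne]
  · push Not at hx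
    simp (disch := omega) only [swap_apply_of_ne_of_ne]

theorem doubleSignChange_mem_of_lt {n a b : ℕ} (ha : 1 ≤ a) (hab : a < b) (hb : b ≤ n) :
    doubleSignChange n a b ∈ Dn n := by
  set g := diagSwap n 1 a * diagSwap n 2 b
  have hg : g ∈ Dn n :=
    mul_mem (diagSwap_mem le_rfl ha (by omega) (by omega))
      (diagSwap_mem (by omega) (by omega) (by omega) hb)
  have hconj : doubleSignChange n a b = g * beta n 0 * g⁻¹ := by
    rw [beta_zero, doubleSignChange, doubleSignChange, conj_swap_mul_swap]
    simp (disch := omega) only [g, diagSwap, Perm.mul_apply, swap_apply_left,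
      swap_apply_of_ne_of_ne]
  rw [hconj]
  exact mul_mem (mul_mem hg (beta_mem (by omega))) (inv_mem hg)

theorem doubleSignChange_mem {n a b : ℕ} (ha : 1 ≤ a) (hb : 1 ≤ b) (han : a ≤ n) (hbn : b ≤ n)
    (hab : a ≠ b) : doubleSignChange n a b ∈ Dn n := by
  rcases hab.lt_or_gt with h | h
  · exact doubleSignChange_mem_of_lt ha h hbn
  · rw [doubleSignChange_comm hab (by omega) (by omega)]
    exact doubleSignChange_mem_of_lt hb h han

theorem signChangeUpTo_add_two (n M : ℕ) :
    signChangeUpTo n (M + 2) = signChangeUpTo n M * doubleSignChange n (M + 1) (M + 2) := by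
  rw [signChangeUpTo, signChangeUpTo, doubleSignChange, mul_assoc]

theorem signChangeUpTo_apply {n M : ℕ} (hM : M ≤ n) (x : ℕ) :
    signChangeUpTo n M x =
      if 1 ≤ x ∧ x ≤ M then n + x else if n + 1 ≤ x ∧ x ≤ n + M then x - n else x := by
  induction M generalizing x with
  | zero => simp only [signChangeUpTo, Perm.one_apply]; split_ifs <;> omega
  | succ M ih =>
    rw [signChangeUpTo, Perm.mul_apply, ih (by omega), swap_apply_def]
    split_ifs <;> omega

theorem signChangeUpTo_mem_of_mul_self_mem {n M : ℕ} {H : Subgroup (Perm ℕ)}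
    (hH : ∀ g ∈ Dn n, g * g ∈ H) (hn : 3 ≤ n) (hM : Even M) (hMn : M ≤ n) :
    signChangeUpTo n M ∈ H := by
  obtain ⟨k, rfl⟩ := hM
  induction k with
  | zero => exact H.one_mem
  | succ k ih =>
    rw [show k + 1 + (k + 1) = k + k + 2 by ring, signChangeUpTo_add_two]
    refine H.mul_mem (ih (by omega)) ?_
    obtain ⟨c, hc1, hcn, hca, hcb⟩ : ∃ c, 1 ≤ c ∧ c ≤ n ∧ c ≠ k + k + 1 ∧ c ≠ k + k + 2 := by
      rcases k with _ | k
      · exact ⟨3, by omega⟩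
      · exact ⟨1, by omega⟩
    rw [doubleSignChange_eq_mul_self (c := c) (by omega) (by omega) hc1 (by omega) (by omega) hcn
      (by omega) hca.symm hcb.symm]
    exact hH _ (mul_mem (doubleSignChange_mem (by omega) hc1 (by omega) hcn hcb.symm)
      (diagSwap_mem (by omega) (by omega) (by omega) (by omega)))

theorem apply_mem_Icc {n : ℕ} (hn : 2 ≤ n) {g : Perm ℕ} (hg : g ∈ Dn n) {x : ℕ}
    (hx : x ∈ Set.Icc 1 (2 * n)) : g x ∈ Set.Icc 1 (2 * n) := by
  by_contra h
  have hfix : g (g x) = g x := (le_fixingSubgroup hn hg) ⟨g x, h⟩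
  rw [g.injective hfix] at h
  exact h hx

theorem apply_one_eq_of_commute {n : ℕ} {c : Perm ℕ} (hn : 3 ≤ n) (hc : c ∈ Dn n)
    (hcomm : ∀ g ∈ Dn n, Commute c g) : c 1 = 1 ∨ c 1 = n + 1 := by
  have hfixed : ∀ j k, 2 ≤ j → j ≤ n → 2 ≤ k → k ≤ n → diagSwap n j k (c 1) = c 1 := by
    intro j k hj hjn hk hkn
    have h := DFunLike.congr_fun (hcomm _ (diagSwap_mem (by omega) (by omega) hjn hkn)).eq 1
    simp (disch := omega) only [Perm.mul_apply, diagSwap, swap_apply_of_ne_of_ne] at h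
    exact h.symm
  have hrange := apply_mem_Icc (by omega) hc (x := 1) (by simp only [Set.mem_Icc]; omega)
  simp only [Set.mem_Icc] at hrange
  by_contra! hne
  obtain ⟨j, k, hj, hjn, hk, hkn, hjk, hmoved⟩ : ∃ j k, 2 ≤ j ∧ j ≤ n ∧ 2 ≤ k ∧ k ≤ n ∧ j ≠ k ∧
      (c 1 = j ∨ c 1 = n + j) := by
    rcases le_or_gt (c 1) n with h | h
    · exact ⟨c 1, if c 1 = 2 then 3 else 2, by split_ifs <;> omega⟩
    · exact ⟨c 1 - n, if c 1 - n = 2 then 3 else 2, by split_ifs <;> omega⟩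
  have h := hfixed j k hj hjn hk hkn
  simp only [diagSwap, Perm.mul_apply, swap_apply_def] at h
  split_ifs at h <;> omega

theorem eq_one_or_eq_signChangeUpTo_of_commute {n : ℕ} {c : Perm ℕ} (hn : 3 ≤ n)
    (hc : c ∈ Dn n) (hcomm : ∀ g ∈ Dn n, Commute c g) : c = 1 ∨ c = signChangeUpTo n n := by
  have hfix : ∀ x ∉ Set.Icc 1 (2 * n), c x = x := fun x hx =>
    le_fixingSubgroup (by omega) hc ⟨x, hx⟩
  have hcomm' : ∀ g ∈ Dn n, ∀ x, c (g x) = g (c x) := fun g hg =>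
    DFunLike.congr_fun (hcomm g hg).eq
  have hβ : beta n 0 1 = n + 1 := by
    simp (disch := omega) only [beta_zero, doubleSignChange, Perm.mul_apply, swap_apply_left,
      swap_apply_of_ne_of_ne]
  have hβ' : beta n 0 (n + 1) = 1 := by
    simp (disch := omega) only [beta_zero, doubleSignChange, Perm.mul_apply, swap_apply_right,
      swap_apply_of_ne_of_ne]
  have hτ : ∀ x ≤ n, diagSwap n 1 x 1 = x := by
    intro x hxn
    simp (disch := omega) only [diagSwap, Perm.mul_apply, swap_apply_left, swap_apply_of_ne_of_ne]
  have hτ' : ∀ x, 1 ≤ x → diagSwap n 1 x (n + 1) = n + x := by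
    intro x hx
    simp (disch := omega) only [diagSwap, Perm.mul_apply, swap_apply_left, swap_apply_of_ne_of_ne]
  have hlow : ∀ x, 1 ≤ x → x ≤ n → c x = diagSwap n 1 x (c 1) := by
    intro x hx hxn
    rw [← hcomm' _ (diagSwap_mem le_rfl hx (by omega) hxn), hτ x hxn]
  have hhigh : ∀ x, 1 ≤ x → x ≤ n → c (n + x) = diagSwap n 1 x (beta n 0 (c 1)) := by
    intro x hx hxn
    rw [← hcomm' _ (beta_mem (by omega)), ← hcomm' _ (diagSwap_mem le_rfl hx (by omega) hxn), hβ,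
      hτ' x hx]
  have hcases : ∀ x, x ∉ Set.Icc 1 (2 * n) ∨ (1 ≤ x ∧ x ≤ n) ∨
      ∃ y, 1 ≤ y ∧ y ≤ n ∧ x = n + y := by
    intro x
    rw [Set.mem_Icc]
    by_cases h : n < x ∧ x ≤ 2 * n
    · exact Or.inr (Or.inr ⟨x - n, by omega, by omega, by omega⟩)
    · omega
  rcases apply_one_eq_of_commute hn hc hcomm with h1 | h1
  · refine Or.inl (Equiv.ext fun x => ?_)
    obtain hx | ⟨hx, hxn⟩ | ⟨y, hy, hyn, rfl⟩ := hcases x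
    · exact hfix x hx
    · rw [hlow x hx hxn, h1, hτ x hxn]; rfl
    · rw [hhigh y hy hyn, h1, hβ, hτ' y hy]; rfl
  · refine Or.inr (Equiv.ext fun x => ?_)
    rw [signChangeUpTo_apply le_rfl]
    obtain hx | ⟨hx, hxn⟩ | ⟨y, hy, hyn, rfl⟩ := hcases x
    · rw [Set.mem_Icc] at hx
      rw [hfix x (by rwa [Set.mem_Icc]), if_neg (by omega), if_neg (by omega)]
    · rw [hlow x hx hxn, h1, hτ' x hx, if_pos ⟨hx, hxn⟩]
    · rw [hhigh y hy hyn, h1, hβ', hτ y hyn, if_neg (by omega), if_pos (by omega)]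
      omega

end Dn

theorem stmt18_general (n : ℕ) (hn : 6 ≤ n) (he : Even n) (s : Fin n → (Dn n))
    (hinv : ∀ i, orderOf (s i) = 2)
    (hgen : Subgroup.closure (Set.range s) = ⊤)
    (hC : IsCOn s Set.univ) :
    ∀ i, s i ∉ Subgroup.center (Dn n) := by
  intro i hcen
  have hne : s i ≠ 1 := fun h => by simpa [h] using hinv i
  have hsq : ∀ g ∈ Dn n, g * g ∈ (subJ s {i}ᶜ).map (Dn n).subtype := fun g hg =>
    ⟨_, Subgroup.mul_self_mem_of_sup_zpowers_eq_top hcen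
      (by rw [← pow_two, ← hinv i, pow_orderOf_eq_one]) (subJ_compl_sup_zpowers hgen i) ⟨g, hg⟩,
      rfl⟩
  rcases Dn.eq_one_or_eq_signChangeUpTo_of_commute (by omega) (s i).2
    (fun g hg => congrArg Subtype.val (Subgroup.mem_center_iff.1 hcen ⟨g, hg⟩).symm) with h | h
  · exact hne (Subtype.ext h)
  · have hz := Dn.signChangeUpTo_mem_of_mul_self_mem hsq (by omega) he le_rfl
    rw [← h] at hz
    exact hC.apply_notMem_subJ_compl hne ((Subgroup.mem_map_iff_mem (Dn n).subtype_injective).1 hz)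

/-- For even `n ≥ 6` and `W ≅ Dₙ`, if `{s₁,…,sₙ}` is a string C-group representation
of `W`, then no `sᵢ` lies in the center `Z(W)`. -/
theorem stmt18 (n : ℕ) (hn : 6 ≤ n) (he : Even n) (s : Fin n → (Dn n))
    (hinv : ∀ i, orderOf (s i) = 2)
    (hgen : Subgroup.closure (Set.range s) = ⊤)
    (hcomm : ∀ i j : Fin n, (i : ℕ) + 2 ≤ (j : ℕ) ∨ (j : ℕ) + 2 ≤ (i : ℕ) →
      Commute (s i) (s j))
    (hC : IsCOn s Set.univ) :
    ∀ i, s i ∉ Subgroup.center (Dn n) :=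
  stmt18_general n hn he s hinv hgen hC
end
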